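/- Let C > 0 be fixed. Then, as ℓ → ∞, ∫_{C/ℓ}^{π/2} P_ℓ(cos θ)² · (4/(ℓ²(ℓ+1)²)) P_ℓ'(cos θ)² sin θ dθ = O(1/ℓ²); that is, there exist K > 0 and ℓ₀ ∈ ℕ such that for all integers ℓ ≥ ℓ₀ the absolute value of this integral is at most K/ℓ². -/

import Mathlib

open Real intervalIntegral

/-- The `n`-th Legendre polynomial via Rodrigues' formula:
`P_n(t) = (1/(2^n n!)) dⁿ/dtⁿ (t² − 1)ⁿ`. -/
noncomputable def legendreP (n : ℕ) (t : ℝ) : ℝ :=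
  (1 / ((2 : ℝ) ^ n * (n.factorial : ℝ))) *
    iteratedDeriv n (fun s : ℝ => (s ^ 2 - 1) ^ n) t

/-!
Substituting `t = cos θ` turns the integral into
`4 / (ℓ² (ℓ + 1)²) · ∫₀^{cos (C/ℓ)} P² P'² dt`. By the Legendre equation
`(1 - t²) P'' - 2t P' + λ P = 0`, `λ = ℓ(ℓ + 1)`, the energy `E = λ P² + (1 - t²) P'²`
satisfies `E' = 2t P'² ≥ 0` on `[0, 1]`, so `E ≤ E(1) = λ` there. Hence `P² ≤ 1`, and since
`t² ≤ 2t` also `P'² ≤ (1 - t²) P'² + 2t P'² ≤ λ + E'`; integrating,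
`∫₀^c P'² ≤ λ c + E(c) - E(0) ≤ 2λ`, so the integral is at most `8 / (ℓ (ℓ + 1))`.
-/

namespace Polynomial

section CommRing

variable {R : Type*} [CommRing R]

theorem sq_sub_one_mul_iterate_derivative {p : R[X]} {c : R}
    (hp : (X ^ 2 - 1) * derivative p = C c * (X * p)) (k : ℕ) :
    (X ^ 2 - 1) * derivative^[k + 2] p =
      C (c - 2 * (k + 1)) * (X * derivative^[k + 1] p) +
        C ((k + 1) * (c - k)) * derivative^[k] p := by
  induction k with
  | zero =>
    have h := congrArg derivative hp
    simp only [derivative_mul, derivative_C, derivative_sub, derivative_X_sq, derivative_one,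
      derivative_X, map_ofNat] at h
    simp only [Function.iterate_succ_apply', Function.iterate_zero_apply, Nat.cast_zero, map_sub,
      map_mul, map_add, map_ofNat, map_one, map_zero]
    linear_combination h
  | succ k ih =>
    have h := congrArg derivative ih
    simp only [derivative_mul, derivative_add, derivative_C, derivative_sub, derivative_X_sq,
      derivative_one, derivative_X, map_ofNat, ← Function.iterate_succ_apply' derivative] at h
    push_cast
    simp only [map_sub, map_mul, map_add, map_ofNat, map_one, map_natCast] at h ⊢
    linear_combination h

theorem sq_sub_one_mul_derivative_sq_sub_one_pow (n : ℕ) :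
    (X ^ 2 - 1 : R[X]) * derivative ((X ^ 2 - 1) ^ n) =
      C (2 * n : R) * (X * (X ^ 2 - 1) ^ n) := by
  rcases n with _ | n
  · simp
  · simp only [derivative_pow, derivative_sub, derivative_X, derivative_one, sub_zero, mul_one,
      Nat.add_sub_cancel, map_mul, map_ofNat, map_natCast]
    push_cast
    ring

theorem eval_iterate_derivative_X_sub_C_pow_mul (n : ℕ) (a : R) (q : R[X]) :
    (derivative^[n] ((X - C a) ^ n * q)).eval a = n.factorial * q.eval a := by
  rw [iterate_derivative_mul, eval_finsetSum,
    Finset.sum_eq_single_of_mem 0 (Finset.mem_range.mpr n.succ_pos)]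
  · simp [iterate_derivative_X_sub_pow_self]
  · intro k hk hk0
    rw [iterate_derivative_X_sub_pow, eval_smul, eval_mul, eval_smul, eval_pow,
      Nat.sub_sub_self (Finset.mem_range_succ_iff.mp hk), eval_sub, eval_X, eval_C, sub_self,
      zero_pow hk0, smul_zero, zero_mul, smul_zero]

end CommRing

theorem iteratedDeriv_eval {𝕜 : Type*} [NontriviallyNormedField 𝕜] (p : 𝕜[X]) (n : ℕ) :
    iteratedDeriv n (fun x => p.eval x) = fun x => (derivative^[n] p).eval x := by
  induction n with
  | zero => simp
  | succ n ih =>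
    ext x
    rw [iteratedDeriv_succ, ih, Function.iterate_succ_apply', Polynomial.deriv]

end Polynomial

section Legendre

open Polynomial

noncomputable def legendrePoly (n : ℕ) : ℝ[X] :=
  C ((2 ^ n * n.factorial : ℝ)⁻¹) * derivative^[n] ((X ^ 2 - 1) ^ n)

theorem legendreP_eq_eval (n : ℕ) : legendreP n = fun t => (legendrePoly n).eval t := by
  have h : (fun s : ℝ => (s ^ 2 - 1) ^ n) = fun s => ((X ^ 2 - 1 : ℝ[X]) ^ n).eval s := by simp
  ext t
  rw [legendreP, h, iteratedDeriv_eval, legendrePoly, eval_mul, eval_C, one_div]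

theorem legendrePoly_eval_one (n : ℕ) : (legendrePoly n).eval 1 = 1 := by
  have h : (X ^ 2 - 1 : ℝ[X]) ^ n = (X - C 1) ^ n * (X + 1) ^ n := by
    rw [← mul_pow, map_one]; ring
  rw [legendrePoly, eval_mul, eval_C, h, eval_iterate_derivative_X_sub_C_pow_mul]
  simp only [eval_pow, eval_add, eval_X, eval_one]
  field_simp
  norm_num

theorem legendrePoly_ode (n : ℕ) :
    (1 - X ^ 2) * derivative (derivative (legendrePoly n)) - 2 * X * derivative (legendrePoly n) +
      C (n * (n + 1) : ℝ) * legendrePoly n = 0 := by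
  have h := sq_sub_one_mul_iterate_derivative
    (sq_sub_one_mul_derivative_sq_sub_one_pow (R := ℝ) n) n
  simp only [legendrePoly, derivative_C_mul, ← Function.iterate_succ_apply' derivative]
  simp only [map_sub, map_mul, map_add, map_ofNat, map_one, map_natCast] at h ⊢
  linear_combination (-C ((2 ^ n * n.factorial : ℝ)⁻¹)) * h

noncomputable def legendreEnergy (n : ℕ) : ℝ[X] :=
  C (n * (n + 1) : ℝ) * legendrePoly n ^ 2 + (1 - X ^ 2) * derivative (legendrePoly n) ^ 2

theorem derivative_legendreEnergy (n : ℕ) :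
    derivative (legendreEnergy n) = 2 * X * derivative (legendrePoly n) ^ 2 := by
  simp only [legendreEnergy, derivative_add, derivative_mul, derivative_C, derivative_sq,
    derivative_sub, derivative_one, derivative_X, mul_one, map_ofNat, zero_mul, zero_add, zero_sub]
  linear_combination 2 * derivative (legendrePoly n) * legendrePoly_ode n

theorem eval_legendreEnergy_nonneg (n : ℕ) {t : ℝ} (ht : t ∈ Set.Icc (-1) 1) :
    0 ≤ (legendreEnergy n).eval t := by
  have : 0 ≤ 1 - t ^ 2 := by nlinarith [ht.1, ht.2]
  simp only [legendreEnergy, eval_add, eval_mul, eval_C, eval_pow, eval_sub, eval_one, eval_X]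
  positivity

theorem eval_legendreEnergy_le (n : ℕ) {t : ℝ} (ht : t ∈ Set.Icc 0 1) :
    (legendreEnergy n).eval t ≤ n * (n + 1) := by
  have hmono : MonotoneOn (fun x => (legendreEnergy n).eval x) (Set.Ici 0) := by
    refine monotoneOn_of_deriv_nonneg (convex_Ici 0) (Polynomial.continuousOn _)
      (Polynomial.differentiableOn _) fun x hx => ?_
    rw [interior_Ici] at hx
    simp only [Polynomial.deriv, derivative_legendreEnergy, eval_mul, eval_pow, eval_X, eval_ofNat]
    have : 0 ≤ x := le_of_lt hx
    positivity
  calc (legendreEnergy n).eval t ≤ (legendreEnergy n).eval 1 :=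
        hmono ht.1 (Set.mem_Ici.mpr zero_le_one) ht.2
    _ = n * (n + 1) := by simp [legendreEnergy, legendrePoly_eval_one]

theorem sq_eval_legendrePoly_le_one {n : ℕ} (hn : 1 ≤ n) {t : ℝ} (ht : t ∈ Set.Icc 0 1) :
    (legendrePoly n).eval t ^ 2 ≤ 1 := by
  have hE := eval_legendreEnergy_le n ht
  have : 0 ≤ 1 - t ^ 2 := by nlinarith [ht.1, ht.2]
  simp only [legendreEnergy, eval_add, eval_mul, eval_C, eval_pow, eval_sub, eval_one,
    eval_X] at hE
  have hpos : (0 : ℝ) < n * (n + 1) := by positivity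
  have h : (n * (n + 1) : ℝ) * (legendrePoly n).eval t ^ 2 ≤ n * (n + 1) * 1 := by
    nlinarith [mul_nonneg this (sq_nonneg ((derivative (legendrePoly n)).eval t))]
  exact le_of_mul_le_mul_left h hpos

theorem sq_eval_derivative_legendrePoly_le (n : ℕ) {t : ℝ} (ht : t ∈ Set.Icc 0 1) :
    (derivative (legendrePoly n)).eval t ^ 2 ≤
      n * (n + 1) + (derivative (legendreEnergy n)).eval t := by
  have hE := eval_legendreEnergy_le n ht
  simp only [legendreEnergy, eval_add, eval_mul, eval_C, eval_pow, eval_sub, eval_one,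
    eval_X] at hE
  rw [derivative_legendreEnergy]
  simp only [eval_mul, eval_pow, eval_X, eval_ofNat]
  have ht2 : 0 ≤ t * (2 - t) := mul_nonneg ht.1 (by linarith [ht.2])
  nlinarith [mul_nonneg ht2 (sq_nonneg ((derivative (legendrePoly n)).eval t)),
    mul_nonneg (by positivity : (0 : ℝ) ≤ n * (n + 1)) (sq_nonneg ((legendrePoly n).eval t))]

theorem integral_sq_derivative_legendrePoly_le (n : ℕ) {c : ℝ} (hc : c ∈ Set.Icc 0 1) :
    ∫ t in (0 : ℝ)..c, (derivative (legendrePoly n)).eval t ^ 2 ≤ 2 * (n * (n + 1)) := by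
  have hFTC : ∫ t in (0 : ℝ)..c, (derivative (legendreEnergy n)).eval t =
      (legendreEnergy n).eval c - (legendreEnergy n).eval 0 :=
    integral_eq_sub_of_hasDerivAt (fun x _ => Polynomial.hasDerivAt _ x)
      ((Polynomial.continuous _).intervalIntegrable _ _)
  calc ∫ t in (0 : ℝ)..c, (derivative (legendrePoly n)).eval t ^ 2
      ≤ ∫ t in (0 : ℝ)..c, (n * (n + 1) + (derivative (legendreEnergy n)).eval t) :=
        integral_mono_on hc.1 (((Polynomial.continuous _).pow 2).intervalIntegrable _ _)
          ((continuous_const.add (Polynomial.continuous _)).intervalIntegrable _ _)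
          fun t ht => sq_eval_derivative_legendrePoly_le n ⟨ht.1, ht.2.trans hc.2⟩
    _ = n * (n + 1) * c + (legendreEnergy n).eval c - (legendreEnergy n).eval 0 := by
        rw [integral_add intervalIntegrable_const
          ((Polynomial.continuous _).intervalIntegrable _ _), integral_const, hFTC, smul_eq_mul]
        ring
    _ ≤ 2 * (n * (n + 1)) := by
        have hpos : (0 : ℝ) ≤ n * (n + 1) := by positivity
        nlinarith [eval_legendreEnergy_le n hc,
          eval_legendreEnergy_nonneg n (t := 0) (by norm_num), mul_le_mul_of_nonneg_left hc.2 hpos]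

theorem deriv_legendreP_eq_eval (n : ℕ) :
    deriv (legendreP n) = fun t => (derivative (legendrePoly n)).eval t := by
  rw [legendreP_eq_eval]; exact funext fun _ => Polynomial.deriv _

theorem continuous_legendreP (n : ℕ) : Continuous (legendreP n) := by
  rw [legendreP_eq_eval]; exact Polynomial.continuous _

theorem continuous_deriv_legendreP (n : ℕ) : Continuous (deriv (legendreP n)) := by
  rw [deriv_legendreP_eq_eval]; exact Polynomial.continuous _

theorem integral_sq_legendreP_mul_sq_deriv_le {n : ℕ} (hn : 1 ≤ n) {c : ℝ}
    (hc : c ∈ Set.Icc 0 1) :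
    ∫ t in (0 : ℝ)..c, legendreP n t ^ 2 * deriv (legendreP n) t ^ 2 ≤ 2 * (n * (n + 1)) := by
  refine le_trans (integral_mono_on hc.1 ?_ ?_ fun t ht => ?_)
    (integral_sq_derivative_legendrePoly_le n hc)
  · exact (((continuous_legendreP n).pow 2).mul
      ((continuous_deriv_legendreP n).pow 2)).intervalIntegrable _ _
  · exact ((Polynomial.continuous _).pow 2).intervalIntegrable _ _
  · rw [deriv_legendreP_eq_eval, legendreP_eq_eval]
    exact mul_le_of_le_one_left (sq_nonneg _)
      (sq_eval_legendrePoly_le_one hn ⟨ht.1, ht.2.trans hc.2⟩)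

end Legendre

theorem integral_comp_cos_mul_sin {g : ℝ → ℝ} (hg : Continuous g) (a b : ℝ) :
    ∫ θ in a..b, g (cos θ) * sin θ = ∫ t in cos b..cos a, g t := by
  have h := integral_comp_mul_deriv (a := a) (b := b) (fun x _ => hasDerivAt_cos x)
    continuous_sin.neg.continuousOn hg
  rw [integral_symm (cos a), ← h, ← integral_neg]
  simp

theorem legendre_sq_deriv_sq_small_general (C : ℝ) :
    ∃ K > 0, ∃ ℓ₀ : ℕ, ∀ ℓ : ℕ, ℓ₀ ≤ ℓ →
      |∫ θ in (C / (ℓ : ℝ))..(π / 2),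
          (legendreP ℓ (Real.cos θ)) ^ 2 *
            ((4 / ((ℓ : ℝ) ^ 2 * ((ℓ : ℝ) + 1) ^ 2)) *
              (deriv (legendreP ℓ) (Real.cos θ)) ^ 2) *
            Real.sin θ| ≤ K / (ℓ : ℝ) ^ 2 := by
  refine ⟨8, by norm_num, ⌈|C|⌉₊ + 1, fun ℓ hℓ => ?_⟩
  have hℓ1 : 1 ≤ ℓ := by omega
  have hcos : cos (C / ℓ) ∈ Set.Icc 0 1 := by
    have hℓC : |C| < ℓ := (Nat.le_ceil _).trans_lt (by exact_mod_cast hℓ)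
    have h1 : |C / ℓ| < 1 := by
      rw [abs_div, Nat.abs_cast, div_lt_one (by positivity)]; exact hℓC
    obtain ⟨h1l, h1r⟩ := abs_lt.mp h1
    exact ⟨cos_nonneg_of_mem_Icc ⟨by linarith [pi_gt_three], by linarith [pi_gt_three]⟩,
      cos_le_one _⟩
  set c4 := 4 / ((ℓ : ℝ) ^ 2 * ((ℓ : ℝ) + 1) ^ 2)
  have hsubst := integral_comp_cos_mul_sin
    (g := fun t => c4 * (legendreP ℓ t ^ 2 * deriv (legendreP ℓ) t ^ 2))
    (continuous_const.mul (((continuous_legendreP ℓ).pow 2).mul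
      ((continuous_deriv_legendreP ℓ).pow 2))) (C / ℓ) (π / 2)
  rw [integral_const_mul] at hsubst
  simp only [cos_pi_div_two, mul_left_comm c4] at hsubst
  have hf0 :
      0 ≤ ∫ t in (0 : ℝ)..cos (C / ℓ), legendreP ℓ t ^ 2 * deriv (legendreP ℓ) t ^ 2 :=
    integral_nonneg hcos.1 fun t _ => by positivity
  rw [hsubst, abs_of_nonneg (mul_nonneg (by positivity) hf0)]
  calc _ ≤ c4 * (2 * (ℓ * (ℓ + 1))) :=
        mul_le_mul_of_nonneg_left (integral_sq_legendreP_mul_sq_deriv_le hℓ1 hcos)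
          (by positivity)
    _ ≤ 8 / (ℓ : ℝ) ^ 2 := by
        rw [div_mul_eq_mul_div, div_le_div_iff₀ (by positivity) (by positivity)]
        nlinarith

theorem legendre_sq_deriv_sq_small (C : ℝ) (hC : 0 < C) :
    ∃ K > 0, ∃ ℓ₀ : ℕ, ∀ ℓ : ℕ, ℓ₀ ≤ ℓ →
      |∫ θ in (C / (ℓ : ℝ))..(π / 2),
          (legendreP ℓ (Real.cos θ)) ^ 2 *
            ((4 / ((ℓ : ℝ) ^ 2 * ((ℓ : ℝ) + 1) ^ 2)) *
              (deriv (legendreP ℓ) (Real.cos θ)) ^ 2) *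
            Real.sin θ| ≤ K / (ℓ : ℝ) ^ 2 :=
  legendre_sq_deriv_sq_small_general C
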